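/- For ℓ ≥ 4 and n ≥ 4^ℓ, g(K^ℓ_n; q) ≤ r(K^ℓ_n; q+1), where g(K^ℓ_n; q) is the least N such that every q-coloring of the ℓ-subsets of any N points in general position in the plane yields n points in convex position all of whose ℓ-subsets are monochromatic. -/

import Mathlib

/-!
Recolour every `ℓ`-subset that is not in convex position with a new colour `q + 1`. Ramsey's
theorem gives `n` points all of whose `ℓ`-subsets share one colour. By the Erdős–Szekeres
theorem (cups and caps, after a shear making all `x`-coordinates distinct) these `n ≥ 4 ^ ℓ`
points in general position contain `ℓ` points in convex position, so the common colour is an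
original one and every `ℓ`-subset is in convex position. As `ℓ ≥ 4`, Carathéodory's theorem
then puts the `n` points themselves in convex position.
-/

/-- A finite planar point set is in general position if no three of its points are collinear. -/
def GenPos (S : Finset (ℝ × ℝ)) : Prop :=
  ∀ T ⊆ S, T.card = 3 → ¬ Collinear ℝ (T : Set (ℝ × ℝ))

/-- A finite planar point set is in convex position if no point lies in the
convex hull of the others. -/
def ConvexPos (S : Finset (ℝ × ℝ)) : Prop :=
  ∀ p ∈ S, p ∉ convexHull ℝ ((S.erase p : Finset (ℝ × ℝ)) : Set (ℝ × ℝ))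

/-- `HyperRamseyProp ℓ n m N` : every `m`-coloring of the `ℓ`-subsets of an `N`-element
set yields an `n`-element subset all of whose `ℓ`-subsets get the same color; i.e.
`r(K^ℓ_n; m) ≤ N`. -/
def HyperRamseyProp (ℓ n m N : ℕ) : Prop :=
  ∀ χ : Finset (Fin N) → Fin m,
    ∃ T : Finset (Fin N), T.card = n ∧ ∃ c : Fin m, ∀ e ⊆ T, e.card = ℓ → χ e = c

/-- `GeomRamseyProp ℓ n q N` : every set of at least `N` points in general position in the
plane, with any `q`-coloring of its `ℓ`-subsets, contains `n` points in convex position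
all of whose `ℓ`-subsets receive the same color; i.e. `g(K^ℓ_n; q) ≤ N`. -/
def GeomRamseyProp (ℓ n q N : ℕ) : Prop :=
  ∀ V : Finset (ℝ × ℝ), N ≤ V.card → GenPos V →
    ∀ χ : Finset (ℝ × ℝ) → Fin q,
      ∃ T ⊆ V, T.card = n ∧ ConvexPos T ∧
        ∃ c : Fin q, ∀ e ⊆ T, e.card = ℓ → χ e = c

open Finset

noncomputable def lineSlope (p q : ℝ × ℝ) : ℝ := (q.2 - p.2) / (q.1 - p.1)

theorem lineSlope_mul_sub {p q : ℝ × ℝ} (h : p.1 ≠ q.1) :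
    lineSlope p q * (q.1 - p.1) = q.2 - p.2 :=
  div_mul_cancel₀ _ (sub_ne_zero.2 h.symm)

theorem mul_lineSlope_between {a b c : ℝ × ℝ} (hab : a.1 < b.1) (hbc : b.1 < c.1) {ε : ℝ}
    (h : ε * lineSlope a b < ε * lineSlope b c) :
    ε * lineSlope a b < ε * lineSlope a c ∧ ε * lineSlope a c < ε * lineSlope b c := by
  have hsum : ε * lineSlope a c * (c.1 - a.1) =
      ε * lineSlope a b * (b.1 - a.1) + ε * lineSlope b c * (c.1 - b.1) := by
    rw [mul_assoc, mul_assoc, mul_assoc, lineSlope_mul_sub (hab.trans hbc).ne,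
      lineSlope_mul_sub hab.ne, lineSlope_mul_sub hbc.ne]
    ring
  constructor <;> nlinarith [sub_pos.2 hab, sub_pos.2 hbc]

theorem collinear_of_lineSlope_eq {a b c : ℝ × ℝ} (hab : a.1 < b.1) (hbc : b.1 < c.1)
    (h : lineSlope a b = lineSlope b c) : Collinear ℝ ({a, b, c} : Set (ℝ × ℝ)) := by
  refine collinear_insert_of_mem_affineSpan_pair ?_
  convert AffineMap.lineMap_mem_affineSpan_pair ((a.1 - b.1) / (c.1 - b.1)) b c
  have hcb : c.1 - b.1 ≠ 0 := (sub_pos.2 hbc).ne'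
  have hslope := lineSlope_mul_sub hab.ne
  rw [h] at hslope
  have hslope' := lineSlope_mul_sub hbc.ne
  rw [AffineMap.lineMap_apply_module]
  ext <;> simp only [Prod.fst_add, Prod.snd_add, Prod.smul_fst, Prod.smul_snd, smul_eq_mul] <;>
    field_simp
  · ring
  · linear_combination (c.1 - b.1) * hslope + (a.1 - b.1) * hslope'

theorem GenPos.mono {S T : Finset (ℝ × ℝ)} (hS : GenPos S) (hTS : T ⊆ S) : GenPos T :=
  fun U hUT => hS U (hUT.trans hTS)

theorem GenPos.lineSlope_ne {S : Finset (ℝ × ℝ)} (hS : GenPos S) {a b c : ℝ × ℝ}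
    (ha : a ∈ S) (hb : b ∈ S) (hc : c ∈ S) (hab : a.1 < b.1) (hbc : b.1 < c.1) :
    lineSlope a b ≠ lineSlope b c := by
  classical
  intro h
  refine hS {a, b, c} (by simp [insert_subset_iff, ha, hb, hc]) ?_ (by
    simpa using collinear_of_lineSlope_eq hab hbc h)
  exact card_eq_three.2 ⟨a, b, c, ne_of_apply_ne Prod.fst hab.ne,
    ne_of_apply_ne Prod.fst (hab.trans hbc).ne, ne_of_apply_ne Prod.fst hbc.ne, rfl⟩

/-- Cups for `ε = 1`, caps for `ε = -1`. -/
def IsConvexChain (ε : ℝ) (P : Finset (ℝ × ℝ)) : Prop :=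
  ∀ a ∈ P, ∀ b ∈ P, ∀ c ∈ P, a.1 < b.1 → b.1 < c.1 → ε * lineSlope a b < ε * lineSlope b c

theorem IsConvexChain.mono {ε : ℝ} {P Q : Finset (ℝ × ℝ)} (hQ : IsConvexChain ε Q)
    (hPQ : P ⊆ Q) : IsConvexChain ε P :=
  fun a ha b hb c hc => hQ a (hPQ ha) b (hPQ hb) c (hPQ hc)

theorem isConvexChain_pair (ε : ℝ) (p q : ℝ × ℝ) : IsConvexChain ε {p, q} := by
  intro a ha b hb c hc hab hbc
  simp only [mem_insert, mem_singleton] at ha hb hc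
  exfalso
  rcases ha with rfl | rfl <;> rcases hb with rfl | rfl <;> rcases hc with rfl | rfl <;> linarith

theorem exists_isConvexChain_card_two (ε : ℝ) {S : Finset (ℝ × ℝ)} (hS : 2 ≤ S.card) :
    ∃ P ⊆ S, P.card = 2 ∧ IsConvexChain ε P := by
  obtain ⟨P, hPS, hP⟩ := exists_subset_card_eq hS
  obtain ⟨p, q, -, rfl⟩ := card_eq_two.1 hP
  exact ⟨_, hPS, hP, isConvexChain_pair ε p q⟩

theorem IsConvexChain.union {ε : ℝ} {P Q : Finset (ℝ × ℝ)} {p : ℝ × ℝ}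
    (hinj : Set.InjOn Prod.fst (↑(P ∪ Q) : Set (ℝ × ℝ)))
    (hP : IsConvexChain ε P) (hQ : IsConvexChain ε Q) (hpP : p ∈ P) (hpQ : p ∈ Q)
    (hPp : ∀ x ∈ P, x.1 ≤ p.1) (hQp : ∀ x ∈ Q, p.1 ≤ x.1)
    (hturn : ∀ a ∈ P, ∀ c ∈ Q, a.1 < p.1 → p.1 < c.1 →
      ε * lineSlope a p < ε * lineSlope p c) :
    IsConvexChain ε (P ∪ Q) := by
  have hp : p ∈ P ∪ Q := mem_union_left Q hpP
  have mem_left : ∀ x ∈ P ∪ Q, x.1 < p.1 → x ∈ P := fun x hx hxp =>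
    (mem_union.1 hx).resolve_right fun hxQ => (hQp x hxQ).not_gt hxp
  have mem_right : ∀ x ∈ P ∪ Q, p.1 < x.1 → x ∈ Q := fun x hx hxp =>
    (mem_union.1 hx).resolve_left fun hxP => (hPp x hxP).not_gt hxp
  have eq_of_eq : ∀ x ∈ P ∪ Q, x.1 = p.1 → x = p := fun x hx hxp => hinj hx hp hxp
  intro a ha b hb c hc hab hbc
  rcases le_or_gt c.1 p.1 with hcp | hpc
  · have hcP : c ∈ P := by
      rcases hcp.lt_or_eq with hcp | hcp
      · exact mem_left c hc hcp
      · exact eq_of_eq c hc hcp ▸ hpP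
    exact hP a (mem_left a ha (by linarith)) b (mem_left b hb (by linarith)) c hcP hab hbc
  rcases le_or_gt p.1 a.1 with hpa | hap
  · have haQ : a ∈ Q := by
      rcases hpa.lt_or_eq with hpa | hpa
      · exact mem_right a ha hpa
      · exact eq_of_eq a ha hpa.symm ▸ hpQ
    exact hQ a haQ b (mem_right b hb (by linarith)) c (mem_right c hc hpc) hab hbc
  have haP := mem_left a ha hap
  have hcQ := mem_right c hc hpc
  rcases lt_trichotomy b.1 p.1 with hbp | hbp | hpb
  · have hbP := mem_left b hb hbp
    have hbpc := (mul_lineSlope_between hbp hpc (hturn b hbP c hcQ hbp hpc)).1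
    linarith [hP a haP b hbP p hpP hab hbp]
  · rw [eq_of_eq b hb hbp]
    exact hturn a haP c hcQ hap hpc
  · have hbQ := mem_right b hb hpb
    have hapb := (mul_lineSlope_between hap hpb (hturn a haP b hbQ hap hpb)).2
    linarith [hQ p hpQ b hbQ c hcQ hpb hbc]

theorem IsConvexChain.convexPos {ε : ℝ} {P : Finset (ℝ × ℝ)}
    (hinj : Set.InjOn Prod.fst (P : Set (ℝ × ℝ))) (hP : IsConvexChain ε P) : ConvexPos P := by
  classical
  intro b hb hmem
  obtain ⟨m, hleft, hright⟩ := Finset.exists_between'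
    ((P.filter (·.1 < b.1)).image fun a => ε * lineSlope a b)
    ((P.filter (b.1 < ·.1)).image fun c => ε * lineSlope b c) (by
      simp only [mem_image, mem_filter]
      rintro _ ⟨a, ⟨ha, hab⟩, rfl⟩ _ ⟨c, ⟨hc, hbc⟩, rfl⟩
      exact hP a ha b hb c hc hab hbc)
  -- `m` separates the slopes of the edges of `P` entering `b` from those leaving it,
  -- so `f` attains its minimum on `P` only at `b`.
  let f : ℝ × ℝ →ₗ[ℝ] ℝ := ε • LinearMap.snd ℝ ℝ ℝ - m • LinearMap.fst ℝ ℝ ℝ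
  have hf : ∀ x, f x = ε * x.2 - m * x.1 := fun x => rfl
  have hsep : (↑(P.erase b) : Set (ℝ × ℝ)) ⊆ {x | f b < f x} := by
    intro x hx
    obtain ⟨hxb, hxP⟩ := mem_erase.1 hx
    simp only [Set.mem_ofPred_eq, hf]
    rcases lt_trichotomy x.1 b.1 with hxb' | hxb' | hxb'
    · have hlt := mul_lt_mul_of_pos_right
        (hleft _ (mem_image_of_mem _ (mem_filter.2 ⟨hxP, hxb'⟩))) (sub_pos.2 hxb')
      rw [mul_assoc, lineSlope_mul_sub hxb'.ne] at hlt
      linarith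
    · exact absurd (hinj hxP hb hxb') hxb
    · have hlt := mul_lt_mul_of_pos_right
        (hright _ (mem_image_of_mem _ (mem_filter.2 ⟨hxP, hxb'⟩))) (sub_pos.2 hxb')
      rw [mul_assoc, lineSlope_mul_sub hxb'.ne] at hlt
      linarith
  exact lt_irrefl (f b) (convexHull_min hsep (convex_halfSpace_gt f.isLinear _) hmem)

section CupsAndCaps

variable {S : Finset (ℝ × ℝ)} (hS : GenPos S) (hinj : Set.InjOn Prod.fst (S : Set (ℝ × ℝ)))
include hS hinj

theorem exists_longer_cup_or_cap {P Q : Finset (ℝ × ℝ)} {p : ℝ × ℝ}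
    (hPS : P ⊆ S) (hQS : Q ⊆ S) (hP : IsConvexChain 1 P) (hQ : IsConvexChain (-1) Q)
    (hpP : p ∈ P) (hpQ : p ∈ Q) (hPp : ∀ x ∈ P, x.1 ≤ p.1) (hQp : ∀ x ∈ Q, p.1 ≤ x.1)
    (hP2 : 2 ≤ P.card) (hQ2 : 2 ≤ Q.card) :
    (∃ P' ⊆ S, P'.card = P.card + 1 ∧ IsConvexChain 1 P') ∨
      ∃ Q' ⊆ S, Q'.card = Q.card + 1 ∧ IsConvexChain (-1) Q' := by
  classical
  obtain ⟨q, hq, hqmax⟩ := (P.erase p).exists_max_image (lineSlope · p)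
    (by rw [← card_pos, card_erase_of_mem hpP]; omega)
  obtain ⟨r, hr, hrmax⟩ := (Q.erase p).exists_max_image (lineSlope p ·)
    (by rw [← card_pos, card_erase_of_mem hpQ]; omega)
  obtain ⟨hqp, hqP⟩ := mem_erase.1 hq
  obtain ⟨hrp, hrQ⟩ := mem_erase.1 hr
  have hqp1 : q.1 < p.1 :=
    (hPp q hqP).lt_of_ne fun h => hqp (hinj (hPS hqP) (hPS hpP) h)
  have hpr1 : p.1 < r.1 :=
    (hQp r hrQ).lt_of_ne fun h => hrp (hinj (hQS hpQ) (hQS hrQ) h).symm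
  have hunion {A B : Finset (ℝ × ℝ)} (hA : A ⊆ S) (hB : B ⊆ S) :
      Set.InjOn Prod.fst (↑(A ∪ B) : Set (ℝ × ℝ)) :=
    hinj.mono (by simp [hA, hB])
  rcases (hS.lineSlope_ne (hPS hqP) (hPS hpP) (hQS hrQ) hqp1 hpr1).lt_or_gt with hlt | hgt
  · have hrP : r ∉ P := fun h => (hPp r h).not_gt hpr1
    have hpr : {p, r} ⊆ Q := by simp [insert_subset_iff, hpQ, hrQ]
    have hchain : IsConvexChain 1 (P ∪ {p, r}) := by
      refine hP.union (hunion hPS (hpr.trans hQS)) (isConvexChain_pair 1 p r) hpP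
        (mem_insert_self p _) hPp (fun x hx => hQp x (hpr hx)) ?_
      intro a ha c hc hap hpc
      obtain rfl | rfl : c = p ∨ c = r := by simpa using hc
      · exact absurd hpc (lt_irrefl _)
      have := hqmax a (mem_erase.2 ⟨ne_of_apply_ne Prod.fst hap.ne, ha⟩)
      linarith
    refine Or.inl ⟨insert r P, insert_subset (hQS hrQ) hPS, card_insert_of_notMem hrP, ?_⟩
    rwa [show insert r P = P ∪ {p, r} by grind]
  · have hqQ : q ∉ Q := fun h => (hQp q h).not_gt hqp1
    have hqp' : {q, p} ⊆ P := by simp [insert_subset_iff, hpP, hqP]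
    have hchain : IsConvexChain (-1) ({q, p} ∪ Q) := by
      refine (isConvexChain_pair (-1) q p).union (hunion (hqp'.trans hPS) hQS) hQ
        (mem_insert_of_mem (mem_singleton_self p)) hpQ (fun x hx => hPp x (hqp' hx)) hQp ?_
      intro a ha c hc hap hpc
      obtain rfl | rfl : a = p ∨ a = q := by simpa [or_comm] using ha
      · exact absurd hap (lt_irrefl _)
      have := hrmax c (mem_erase.2 ⟨ne_of_apply_ne Prod.fst hpc.ne', hc⟩)
      linarith
    refine Or.inr ⟨insert q Q, insert_subset (hPS hqP) hQS, card_insert_of_notMem hqQ, ?_⟩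
    rwa [show insert q Q = {q, p} ∪ Q by grind]

theorem exists_cup_or_cap (a b : ℕ) (hcard : (a + b).choose a < S.card) :
    (∃ P ⊆ S, P.card = a + 2 ∧ IsConvexChain 1 P) ∨
      ∃ Q ⊆ S, Q.card = b + 2 ∧ IsConvexChain (-1) Q := by
  classical
  induction a generalizing b S with
  | zero => exact Or.inl (exists_isConvexChain_card_two 1 (by simp at hcard; omega))
  | succ a iha =>
    induction b generalizing S with
    | zero => exact Or.inr (exists_isConvexChain_card_two (-1) (by simp at hcard; omega))
    | succ b ihb =>
      -- No cup with `a + 2` points lies in `S \ E`, and a cap in `E` starts where such a cup ends.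
      set E := S.filter fun p =>
        ∃ P ⊆ S, P.card = a + 2 ∧ IsConvexChain 1 P ∧ p ∈ P ∧ ∀ x ∈ P, x.1 ≤ p.1
      have hES : E ⊆ S := filter_subset _ _
      have hpascal : (a + 1 + (b + 1)).choose (a + 1) =
          (a + (b + 1)).choose a + (a + 1 + b).choose (a + 1) := by
        rw [show a + 1 + (b + 1) = a + 1 + b + 1 by omega, Nat.choose_succ_succ',
          show a + 1 + b = a + (b + 1) by omega]
      have hsplit := card_sdiff_add_card_eq_card hES
      by_cases hcard' : (a + (b + 1)).choose a < (S \ E).card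
      · rcases iha (hS.mono sdiff_subset) (hinj.mono (coe_subset.2 sdiff_subset)) (b + 1)
          hcard' with ⟨P, hPS, hPcard, hP⟩ | ⟨Q, hQS, hQcard, hQ⟩
        · exfalso
          obtain ⟨p, hp, hpmax⟩ := P.exists_max_image Prod.fst (by rw [← card_pos]; omega)
          have hpE : p ∈ E := mem_filter.2
            ⟨sdiff_subset (hPS hp), P, hPS.trans sdiff_subset, hPcard, hP, hp, hpmax⟩
          exact (mem_sdiff.1 (hPS hp)).2 hpE
        · exact Or.inr ⟨Q, hQS.trans sdiff_subset, hQcard, hQ⟩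
      · rcases ihb (hS.mono hES) (hinj.mono (coe_subset.2 hES)) (by omega) with
          ⟨P, hPE, hPcard, hP⟩ | ⟨Q, hQE, hQcard, hQ⟩
        · exact Or.inl ⟨P, hPE.trans hES, hPcard, hP⟩
        obtain ⟨p, hpQ, hpmin⟩ := Q.exists_min_image Prod.fst (by rw [← card_pos]; omega)
        obtain ⟨-, P, hPS, hPcard, hP, hpP, hpmax⟩ := mem_filter.1 (hQE hpQ)
        rcases exists_longer_cup_or_cap hS hinj hPS (hQE.trans hES) hP hQ hpP hpQ hpmax hpmin
          (by omega) (by omega) with ⟨P', hP'S, hP'card, hP'⟩ | ⟨Q', hQ'S, hQ'card, hQ'⟩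
        · exact Or.inl ⟨P', hP'S, by omega, hP'⟩
        · exact Or.inr ⟨Q', hQ'S, by omega, hQ'⟩

end CupsAndCaps

theorem Collinear.image {k V₁ V₂ P₁ P₂ : Type*} [DivisionRing k] [AddCommGroup V₁] [Module k V₁]
    [AddTorsor V₁ P₁] [AddCommGroup V₂] [Module k V₂] [AddTorsor V₂ P₂] {s : Set P₁}
    (h : Collinear k s) (f : P₁ →ᵃ[k] P₂) : Collinear k (f '' s) := by
  have := lift_rank_map_le f.linear (vectorSpan k s)
  rw [AffineMap.map_vectorSpan] at this
  exact Cardinal.lift_le_one_iff.1 (this.trans (Cardinal.lift_le_one_iff.2 h))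

theorem GenPos.image {S : Finset (ℝ × ℝ)} (hS : GenPos S) (e : (ℝ × ℝ) ≃ᵃ[ℝ] ℝ × ℝ) :
    GenPos (S.image e) := by
  classical
  intro T hT hT3 hcol
  refine hS (T.image e.symm) ?_ ?_ ?_
  · simpa [image_image, Function.comp_def] using image_subset_image (f := e.symm) hT
  · rwa [card_image_of_injective _ e.symm.injective]
  · rw [coe_image]
    exact hcol.image e.symm.toAffineMap

theorem ConvexPos.image {P : Finset (ℝ × ℝ)} (hP : ConvexPos P) (e : (ℝ × ℝ) ≃ᵃ[ℝ] ℝ × ℝ) :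
    ConvexPos (P.image e) := by
  classical
  intro y hy hmem
  obtain ⟨x, hx, rfl⟩ := mem_image.1 hy
  rw [← image_erase e.injective, coe_image, ← e.coe_toAffineMap,
    ← AffineMap.image_convexHull] at hmem
  exact hP x hx (e.injective.mem_set_image.1 hmem)

noncomputable def shear (t : ℝ) : (ℝ × ℝ) ≃ₗ[ℝ] ℝ × ℝ where
  toFun p := (p.1 + t * p.2, p.2)
  invFun p := (p.1 - t * p.2, p.2)
  map_add' p q := by ext <;> simp only [Prod.fst_add, Prod.snd_add]; ring
  map_smul' c p := by ext <;> simp only [Prod.smul_fst, Prod.smul_snd, smul_eq_mul,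
    RingHom.id_apply]; ring
  left_inv p := by simp
  right_inv p := by simp

theorem exists_shear_injOn_fst (S : Finset (ℝ × ℝ)) :
    ∃ t, Set.InjOn Prod.fst (↑(S.image (shear t)) : Set (ℝ × ℝ)) := by
  classical
  -- avoid the finitely many `t` for which the shear puts two points of `S` on a vertical line
  obtain ⟨t, ht⟩ := Infinite.exists_notMem_finset
    ((S ×ˢ S).image fun pq => (pq.2.1 - pq.1.1) / (pq.1.2 - pq.2.2))
  refine ⟨t, ?_⟩
  simp only [coe_image, Set.InjOn, Set.mem_image, mem_coe]
  rintro _ ⟨p, hp, rfl⟩ _ ⟨q, hq, rfl⟩ (h : p.1 + t * p.2 = q.1 + t * q.2)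
  by_cases h2 : p.2 = q.2
  · rw [show p = q from Prod.ext (by rw [h2] at h; linarith) h2]
  · refine absurd (mem_image.2 ⟨(p, q), mem_product.2 ⟨hp, hq⟩, ?_⟩) ht
    rw [div_eq_iff (sub_ne_zero.2 h2)]
    linarith

theorem exists_convexPos_subset_of_choose_lt {S : Finset (ℝ × ℝ)} (hS : GenPos S) (k : ℕ)
    (hcard : (k + k).choose k < S.card) : ∃ P ⊆ S, P.card = k + 2 ∧ ConvexPos P := by
  classical
  obtain ⟨t, ht⟩ := exists_shear_injOn_fst S
  let e := (shear t).toAffineEquiv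
  have hcard' : (k + k).choose k < (S.image e).card := by
    rwa [card_image_of_injective _ e.injective]
  have hconv : ∃ P ⊆ S.image e, P.card = k + 2 ∧ ConvexPos P := by
    rcases exists_cup_or_cap (hS.image e) ht k k hcard' with
      ⟨P, hPS, hPcard, hP⟩ | ⟨P, hPS, hPcard, hP⟩ <;>
    exact ⟨P, hPS, hPcard, hP.convexPos (ht.mono (coe_subset.2 hPS))⟩
  obtain ⟨P, hPS, hPcard, hP⟩ := hconv
  refine ⟨P.image e.symm, ?_, by rwa [card_image_of_injective _ e.symm.injective],
    hP.image e.symm⟩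
  simpa [image_image, Function.comp_def] using image_subset_image (f := e.symm) hPS

theorem convexPos_of_forall_card_eq {T : Finset (ℝ × ℝ)} {ℓ : ℕ} (hℓ : 4 ≤ ℓ) (hT : ℓ ≤ T.card)
    (h : ∀ e ⊆ T, e.card = ℓ → ConvexPos e) : ConvexPos T := by
  classical
  intro p hp hmem
  -- Carathéodory: `p` lies in the convex hull of at most three points of `T.erase p`
  rw [convexHull_eq_union] at hmem
  simp only [Set.mem_iUnion] at hmem
  obtain ⟨u, hu, hind, hpu⟩ := hmem
  have hu3 : u.card ≤ 3 := by
    have := hind.card_le_finrank_succ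
    have := Submodule.finrank_le (vectorSpan ℝ (Set.range ((↑) : u → ℝ × ℝ)))
    simp only [Fintype.card_coe, Module.finrank_prod, Module.finrank_self] at *
    omega
  have hu : u ⊆ T.erase p := coe_subset.1 hu
  obtain ⟨e, hpue, heT, he⟩ := exists_subsuperset_card_eq
    (insert_subset hp (hu.trans (erase_subset p T))) ((card_insert_le p u).trans (by omega)) hT
  refine h e heT he p (hpue (mem_insert_self p u)) (convexHull_mono ?_ hpu)
  intro x hx
  exact mem_erase.2 ⟨ne_of_mem_erase (hu hx), hpue (mem_insert_of_mem hx)⟩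

theorem choose_lt_four_pow (k : ℕ) : (k + k).choose k < 4 ^ (k + 2) :=
  calc (k + k).choose k ≤ 2 ^ (k + k) := Nat.choose_le_two_pow _ _
    _ = 4 ^ k := by rw [← two_mul, pow_mul]; norm_num
    _ < 4 ^ (k + 2) := Nat.pow_lt_pow_right (by norm_num) (by omega)

theorem HyperRamseyProp.exists_monochromatic_subset {ℓ n m N : ℕ} (h : HyperRamseyProp ℓ n m N)
    {α : Type*} {V : Finset α} (hV : N ≤ V.card) (χ : Finset α → Fin m) :
    ∃ T ⊆ V, T.card = n ∧ ∃ c, ∀ e ⊆ T, e.card = ℓ → χ e = c := by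
  let f : Fin N ↪ α :=
    (Fin.castLEEmb hV).trans (V.equivFin.symm.toEmbedding.trans (Function.Embedding.subtype _))
  obtain ⟨T, hT, c, hc⟩ := h fun e => χ (e.map f)
  refine ⟨T.map f, ?_, by rw [card_map, hT], c, fun e he he' => ?_⟩
  · intro x hx
    obtain ⟨i, -, rfl⟩ := mem_map.1 hx
    exact (V.equivFin.symm _).2
  · obtain ⟨u, hu, rfl⟩ := subset_map_iff.1 he
    exact hc u hu (by rwa [card_map] at he')

/-- For `ℓ ≥ 4` and `n ≥ 4^ℓ`, `g(K^ℓ_n; q) ≤ r(K^ℓ_n; q+1)`: any `N` realizing the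
`(q+1)`-color hypergraph Ramsey property also realizes the geometric
monochromatic-convex property. -/
theorem geom_le_hyper_ramsey (ℓ n q N : ℕ) (hl : 4 ≤ ℓ) (hn : 4 ^ ℓ ≤ n)
    (h : HyperRamseyProp ℓ n (q + 1) N) :
    GeomRamseyProp ℓ n q N := by
  classical
  intro V hV hgen χ
  -- subsets not in convex position receive the extra colour `Fin.last q`
  obtain ⟨T, hTV, hTcard, c, hc⟩ := h.exists_monochromatic_subset hV fun e =>
    if ConvexPos e then (χ e).castSucc else Fin.last q
  obtain ⟨k, rfl⟩ : ∃ k, ℓ = k + 2 := ⟨ℓ - 2, by omega⟩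
  obtain ⟨P, hPT, hPcard, hP⟩ := exists_convexPos_subset_of_choose_lt (hgen.mono hTV) k
    (by have := choose_lt_four_pow k; omega)
  obtain ⟨c, rfl⟩ : ∃ c', Fin.castSucc c' = c := by
    refine Fin.exists_castSucc_eq.2 ?_
    rw [← hc P hPT hPcard, if_pos hP]
    exact (Fin.castSucc_lt_last _).ne
  have hmono : ∀ e ⊆ T, e.card = k + 2 → ConvexPos e ∧ χ e = c := by
    intro e he hecard
    have := hc e he hecard
    split_ifs at this with hconv
    · exact ⟨hconv, Fin.castSucc_injective _ this⟩
    · exact absurd this.symm (Fin.castSucc_lt_last _).ne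
  exact ⟨T, hTV, hTcard, convexPos_of_forall_card_eq hl (hPcard ▸ card_le_card hPT)
    fun e he hecard => (hmono e he hecard).1, c, fun e he hecard => (hmono e he hecard).2⟩
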